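/- Let G be a 2-edge-connected, non-regular finite graph (multiple edges allowed, no loops), let F be a weak 2-factor of G, let w ∈ V(G) and λ ∈ {0,1}. Call a tree in G good if its vertex set is a union of vertex sets of components of F. Suppose G has no good weakly even (w,λ)-tree. Then the component C₀ of F containing w is an even cycle; moreover, if (X₀,Y₀) is the (w,λ)-bipartition of C₀, then every vertex of Y₀ has degree Δ(G) in G and Y₀ is an independent set in G. -/

import Mathlib

/-- A multigraph on vertex type `V` with edge type `E`: each edge is assigned an
unordered pair of distinct endpoints (multiple edges allowed, no loops). -/
structure Multigraph (V : Type) (E : Type) where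
  inc : E → Sym2 V
  loopless : ∀ e : E, ¬ (inc e).IsDiag

namespace Multigraph

variable {V E : Type}

/-- `u` and `v` are joined by an edge belonging to the edge set `S`. -/
def AdjOn (G : Multigraph V E) (S : Set E) (u v : V) : Prop :=
  ∃ e ∈ S, G.inc e = s(u, v)

/-- `v` is reachable from `u` using edges in `S`. -/
def ReachOn (G : Multigraph V E) (S : Set E) (u v : V) : Prop :=
  Relation.ReflTransGen (G.AdjOn S) u v

/-- `G` is connected. -/
def Connected (G : Multigraph V E) : Prop :=
  Nonempty V ∧ ∀ u v : V, G.ReachOn Set.univ u v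

/-- The degree of `v` in the spanning subgraph with edge set `S`. -/
noncomputable def degOn (G : Multigraph V E) (S : Set E) (v : V) : ℕ :=
  {e ∈ S | v ∈ G.inc e}.ncard

/-- The degree of `v` in `G`. -/
noncomputable def degree (G : Multigraph V E) (v : V) : ℕ :=
  G.degOn Set.univ v

/-- The maximum degree `Δ(G)`. -/
noncomputable def maxDegree (G : Multigraph V E) [Fintype V] : ℕ :=
  Finset.univ.sup G.degree

/-- `G` is regular. -/
def IsRegular (G : Multigraph V E) : Prop :=
  ∃ r : ℕ, ∀ v : V, G.degree v = r

/-- The 2-colouring `c` is proper on the edge set `S`: the two endpoints of any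
edge of `S` receive different colours. -/
def ProperOn (G : Multigraph V E) (S : Set E) (c : V → Bool) : Prop :=
  ∀ e ∈ S, ∀ u v : V, G.inc e = s(u, v) → c u ≠ c v

/-- `G` is bipartite. -/
def IsBipartite (G : Multigraph V E) : Prop :=
  ∃ c : V → Bool, G.ProperOn Set.univ c

/-- The sub-multigraph of `G` with vertex set `U` and edge set `S` is a tree:
`U` is nonempty, every edge of `S` joins vertices of `U`, any two vertices of `U`
are joined by a walk using edges of `S`, and there are exactly `|U| - 1` edges
(which forces acyclicity, and in particular forbids parallel edges in `S`). -/
structure IsTree (G : Multigraph V E) (U : Set V) (S : Set E) : Prop where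
  nonempty : U.Nonempty
  edges_in : ∀ e ∈ S, ∀ v : V, v ∈ G.inc e → v ∈ U
  conn : ∀ u ∈ U, ∀ v ∈ U, G.ReachOn S u v
  card_eq : S.ncard + 1 = U.ncard

/-- `v` is a leaf of the subgraph with edge set `S`. -/
def IsLeaf (G : Multigraph V E) (S : Set E) (v : V) : Prop :=
  G.degOn S v = 1

/-- `e` is a cutedge: after removing `e`, some pair of vertices is separated. -/
def IsCutedge (G : Multigraph V E) (e : E) : Prop :=
  ∃ u v : V, ¬ G.ReachOn {e}ᶜ u v

/-- `G` is 2-edge-connected: connected and without cutedges. -/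
def TwoEdgeConnected (G : Multigraph V E) : Prop :=
  G.Connected ∧ ∀ e : E, ¬ G.IsCutedge e

/-- The edge set `S` is a weak 2-factor of `G`: every vertex has degree at most
2 in `S` (equivalently, every component of the spanning subgraph is a path —
possibly a single vertex — or a cycle), and every vertex of degree less than 2
in `S` (i.e. every endvertex of a path component) has degree less than `Δ(G)`
in `G`. -/
def IsWeakTwoFactor (G : Multigraph V E) [Fintype V] (S : Set E) : Prop :=
  ∀ v : V, G.degOn S v ≤ 2 ∧ (G.degOn S v < 2 → G.degree v < G.maxDegree)

end Multigraph

/-!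
The component `C` of `w` in `F` has maximum degree at most `2`. If some vertex of `C` had
`F`-degree below `2`, then `C` would be a path, hence itself a good tree, and its leaves, being
ends of a path of `F`, have degree below `Δ(G)`; so `C` is a cycle. Deleting an edge `e` of `C`
leaves a good spanning tree of `C` whose leaves are the ends of `e`, so these ends are never both
of type `0`. If they have different types, the colouring of `C - e` is a proper colouring of `C`;
otherwise both ends of every edge `e` are of type `1` for the colouring of `C - e`, which is
impossible at an edge `wy` and the other edge `e'` at `y`, since `wy` lies in `C - e'`.
A type-`1` vertex `a` of smaller degree would make `C - e` weakly even for an edge `e` at `a`.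
Finally, an edge `uv` of `G` between type-`1` vertices of `C`, with `v ≠ w`, gives the good tree
`C - g - g' + uv`, where `g`, `g'` are the edges of `C` at `v`; with `v` recoloured to type `0`
its leaves are `v` and the two neighbours of `v` on `C`, all of type `0`.
-/

namespace Multigraph

variable {V E : Type} (G : Multigraph V E)

theorem exists_inc_eq (e : E) : ∃ x y, G.inc e = s(x, y) :=
  ⟨_, _, (Quot.out_eq (G.inc e)).symm⟩

theorem ne_of_inc_eq {e : E} {x y : V} (h : G.inc e = s(x, y)) : x ≠ y := by
  rintro rfl
  exact G.loopless e (by rw [h]; exact Sym2.mk_isDiag_iff.2 rfl)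

theorem adjOn_symm {S : Set E} {u v : V} (h : G.AdjOn S u v) : G.AdjOn S v u := by
  obtain ⟨e, he, hinc⟩ := h
  exact ⟨e, he, hinc.trans Sym2.eq_swap⟩

theorem reachOn_symm {S : Set E} {u v : V} (h : G.ReachOn S u v) : G.ReachOn S v u := by
  induction h with
  | refl => exact .refl
  | tail _ hadj ih => exact .head (G.adjOn_symm hadj) ih

theorem reachOn_mono {S T : Set E} (hST : S ⊆ T) {u v : V} (h : G.ReachOn S u v) :
    G.ReachOn T u v := by
  induction h with
  | refl => exact .refl
  | tail _ hadj ih =>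
    obtain ⟨e, he, hinc⟩ := hadj
    exact ih.tail ⟨e, hST he, hinc⟩

theorem reachOn_sdiff_of_reachOn_ends {S : Set E} {g : E} {y₁ y₂ : V}
    (hg : G.inc g = s(y₁, y₂)) (hy : G.ReachOn (S \ {g}) y₁ y₂) {a b : V}
    (h : G.ReachOn S a b) : G.ReachOn (S \ {g}) a b := by
  induction h with
  | refl => exact .refl
  | @tail p q _ hpq ih =>
    obtain ⟨e, he, hinc⟩ := hpq
    by_cases heg : e = g
    · subst heg
      rcases Sym2.eq_iff.1 (hinc.symm.trans hg) with ⟨rfl, rfl⟩ | ⟨rfl, rfl⟩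
      · exact ih.trans hy
      · exact ih.trans (G.reachOn_symm hy)
    · exact ih.tail ⟨e, ⟨he, heg⟩, hinc⟩

/-- A walk through the vertex `x`, whose only edge is `g = xz`, bounces back at `x`; replacing
`x` by `z` gives a walk avoiding `g`. -/
theorem reachOn_sdiff_of_unique_inc [DecidableEq V] {S : Set E} {g : E} {x z : V}
    (hg : G.inc g = s(x, z)) (huniq : ∀ e ∈ S, x ∈ G.inc e → e = g) {a b : V}
    (h : G.ReachOn S a b) :
    G.ReachOn (S \ {g}) (if a = x then z else a) (if b = x then z else b) := by
  induction h with
  | refl => exact .refl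
  | @tail p q _ hpq ih =>
    obtain ⟨e, he, hinc⟩ := hpq
    by_cases heg : e = g
    · subst heg
      rcases Sym2.eq_iff.1 (hinc.symm.trans hg) with ⟨rfl, rfl⟩ | ⟨rfl, rfl⟩ <;> simpa using ih
    · have hp : p ≠ x := fun h => heg (huniq e he (by rw [hinc, h]; exact Sym2.mem_mk_left _ _))
      have hq : q ≠ x := fun h => heg (huniq e he (by rw [hinc, h]; exact Sym2.mem_mk_right _ _))
      rw [if_neg hp] at ih
      rw [if_neg hq]
      exact ih.tail ⟨e, ⟨he, heg⟩, hinc⟩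

variable {G} in
theorem ProperOn.mono {S T : Set E} {c : V → Bool} (hc : G.ProperOn T c) (hST : S ⊆ T) :
    G.ProperOn S c :=
  fun e he => hc e (hST he)

variable {G} in
theorem ProperOn.insert_update [DecidableEq V] {S : Set E} {c : V → Bool}
    (hc : G.ProperOn S c) {f : E} {u v : V} (hf : G.inc f = s(u, v))
    (hS : ∀ e ∈ S, v ∉ G.inc e) {b : Bool} (hb : c u ≠ b) :
    G.ProperOn (insert f S) (Function.update c v b) := by
  have huv := G.ne_of_inc_eq hf
  rintro e (rfl | he) x y hxy
  · rcases Sym2.eq_iff.1 (hxy.symm.trans hf) with ⟨rfl, rfl⟩ | ⟨rfl, rfl⟩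
    · simpa [huv] using hb
    · simpa [huv] using hb.symm
  · have hx : x ≠ v := fun h => hS e he (by rw [hxy, h]; exact Sym2.mem_mk_left _ _)
    have hy : y ≠ v := fun h => hS e he (by rw [hxy, h]; exact Sym2.mem_mk_right _ _)
    rw [Function.update_of_ne hx, Function.update_of_ne hy]
    exact hc e he x y hxy

theorem exists_mem_inc_of_degOn_pos {S : Set E} {v : V} (h : 0 < G.degOn S v) :
    ∃ e ∈ S, v ∈ G.inc e :=
  Set.nonempty_of_ncard_ne_zero h.ne'

theorem mem_of_degOn_pos {S : Set E} {U : Set V} (hin : ∀ e ∈ S, ∀ x ∈ G.inc e, x ∈ U)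
    {v : V} (h : 0 < G.degOn S v) : v ∈ U := by
  obtain ⟨e, he, hv⟩ := G.exists_mem_inc_of_degOn_pos h
  exact hin e he v hv

theorem degOn_le_degOn [Finite E] {S T : Set E} {v : V} (h : ∀ e ∈ S, v ∈ G.inc e → e ∈ T) :
    G.degOn S v ≤ G.degOn T v :=
  Set.ncard_le_ncard fun e ⟨he, hv⟩ => ⟨h e he hv, hv⟩

theorem degOn_sdiff_singleton_add_one [Finite E] {S : Set E} {e : E} {v : V} (he : e ∈ S)
    (hv : v ∈ G.inc e) : G.degOn (S \ {e}) v + 1 = G.degOn S v := by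
  have hset : {e' ∈ S \ {e} | v ∈ G.inc e'} = {e' ∈ S | v ∈ G.inc e'} \ {e} := by
    ext e'
    simp only [Set.mem_ofPred_eq, Set.mem_sdiff, Set.mem_singleton_iff]
    tauto
  have he' : e ∈ {e' ∈ S | v ∈ G.inc e'} := ⟨he, hv⟩
  rw [degOn, hset, Set.ncard_sdiff_singleton_add_one he']
  rfl

theorem degOn_sdiff_of_notMem {S D : Set E} {v : V} (hD : ∀ e ∈ D, v ∉ G.inc e) :
    G.degOn (S \ D) v = G.degOn S v := by
  unfold degOn
  congr 1
  ext e
  simp only [Set.mem_ofPred_eq, Set.mem_sdiff]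
  exact ⟨fun h => ⟨h.1.1, h.2⟩, fun h => ⟨⟨h.1, fun heD => hD e heD h.2⟩, h.2⟩⟩

section Counting

variable [Finite E]

theorem sum_degOn_eq {S : Set E} {U : Set V} (hU : U.Finite)
    (hin : ∀ e ∈ S, ∀ x ∈ G.inc e, x ∈ U) :
    ∑ a ∈ hU.toFinset, G.degOn S a = 2 * S.ncard := by
  classical
  have hS : S.Finite := S.toFinite
  have hdeg : ∀ a, G.degOn S a = ∑ e ∈ hS.toFinset, if a ∈ G.inc e then 1 else 0 := by
    intro a
    rw [Finset.sum_boole, Nat.cast_id, ← Set.ncard_coe_finset, degOn]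
    congr 1
    ext e
    simp
  have hends : ∀ e ∈ hS.toFinset, ∑ a ∈ hU.toFinset, (if a ∈ G.inc e then 1 else 0) = 2 := by
    intro e he
    obtain ⟨x, y, hxy⟩ := G.exists_inc_eq e
    have hin' := hin e (hS.mem_toFinset.1 he)
    have hfilter : hU.toFinset.filter (· ∈ G.inc e) = {x, y} := by
      ext a
      simp only [Finset.mem_filter, Set.Finite.mem_toFinset, Finset.mem_insert,
        Finset.mem_singleton, hxy, Sym2.mem_iff]
      exact ⟨fun h => h.2, fun h => ⟨hin' a (by rw [hxy, Sym2.mem_iff]; exact h), h⟩⟩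
    rw [Finset.sum_boole, hfilter, Finset.card_pair (G.ne_of_inc_eq hxy), Nat.cast_ofNat]
  simp_rw [hdeg]
  rw [Finset.sum_comm, Finset.sum_congr rfl hends, Finset.sum_const, smul_eq_mul, mul_comm,
    Set.ncard_eq_toFinset_card S hS]

variable [Finite V]

theorem two_mul_ncard_add_two_le {S : Set E} {U : Set V}
    (hin : ∀ e ∈ S, ∀ x ∈ G.inc e, x ∈ U) (hdeg : ∀ x ∈ U, G.degOn S x ≤ 2) {a : V}
    (ha : a ∈ U) : 2 * S.ncard + 2 ≤ 2 * U.ncard + G.degOn S a := by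
  classical
  have hU : U.Finite := U.toFinite
  have haU : a ∈ hU.toFinset := hU.mem_toFinset.2 ha
  have hsum := G.sum_degOn_eq hU hin
  rw [← Finset.sum_erase_add _ _ haU] at hsum
  have hrest : ∑ x ∈ hU.toFinset.erase a, G.degOn S x ≤ (hU.toFinset.erase a).card • 2 :=
    Finset.sum_le_card_nsmul _ _ _ fun x hx =>
      hdeg x (hU.mem_toFinset.1 (Finset.mem_of_mem_erase hx))
  have hcard : (hU.toFinset.erase a).card + 1 = U.ncard := by
    rw [Finset.card_erase_add_one haU, Set.ncard_eq_toFinset_card U hU]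
  rw [smul_eq_mul] at hrest
  omega

theorem even_degOn {S : Set E} {U : Set V} (hin : ∀ e ∈ S, ∀ x ∈ G.inc e, x ∈ U) {a : V}
    (ha : a ∈ U) (hdeg : ∀ x ∈ U, x ≠ a → G.degOn S x = 2) : Even (G.degOn S a) := by
  classical
  have hU : U.Finite := U.toFinite
  have haU : a ∈ hU.toFinset := hU.mem_toFinset.2 ha
  have hsum := G.sum_degOn_eq hU hin
  rw [← Finset.sum_erase_add _ _ haU, Finset.sum_const_nat fun x hx =>
    hdeg x (hU.mem_toFinset.1 (Finset.mem_of_mem_erase hx)) (Finset.ne_of_mem_erase hx)] at hsum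
  rw [Nat.even_iff]
  omega

end Counting

/-- Mathlib's theory of trees applies through this simple graph, in which parallel edges of `S`
collapse. -/
def simpleOn (S : Set E) (U : Set V) : SimpleGraph U where
  Adj a b := G.AdjOn S a b
  symm := ⟨fun _ _ => G.adjOn_symm⟩
  loopless := ⟨fun _ ⟨_, _, he⟩ => G.ne_of_inc_eq he rfl⟩

theorem connected_simpleOn {S : Set E} {U : Set V} (hne : U.Nonempty)
    (hin : ∀ e ∈ S, ∀ x ∈ G.inc e, x ∈ U) (hconn : ∀ a ∈ U, ∀ b ∈ U, G.ReachOn S a b) :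
    (G.simpleOn S U).Connected := by
  have : Nonempty U := hne.to_subtype
  refine ⟨fun a b => ?_⟩
  suffices ∀ y, G.ReachOn S a y → ∃ hy : y ∈ U, (G.simpleOn S U).Reachable a ⟨y, hy⟩ by
    obtain ⟨_, h⟩ := this b (hconn a a.2 b b.2)
    exact h
  intro y hy
  induction hy with
  | refl => exact ⟨a.2, .refl _⟩
  | @tail p q _ hpq ih =>
    obtain ⟨hp, hr⟩ := ih
    obtain ⟨e, he, hinc⟩ := hpq
    have hq : q ∈ U := hin e he q (by rw [hinc]; exact Sym2.mem_mk_right _ _)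
    have hadj : (G.simpleOn S U).Adj ⟨p, hp⟩ ⟨q, hq⟩ := ⟨e, he, hinc⟩
    exact ⟨hq, hr.trans hadj.reachable⟩

theorem card_edgeSet_simpleOn_le [Finite E] (S : Set E) (U : Set V) :
    Nat.card (G.simpleOn S U).edgeSet ≤ S.ncard := by
  have hsub : Sym2.map Subtype.val '' (G.simpleOn S U).edgeSet ⊆ G.inc '' S := by
    rintro _ ⟨z, hz, rfl⟩
    induction z using Sym2.ind with
    | _ a b =>
      obtain ⟨e, he, hinc⟩ := hz
      exact ⟨e, he, by simpa using hinc⟩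
  calc Nat.card (G.simpleOn S U).edgeSet
      = (Sym2.map Subtype.val '' (G.simpleOn S U).edgeSet).ncard := by
        rw [Set.ncard_image_of_injective _ (Sym2.map.injective Subtype.val_injective)]
        rfl
    _ ≤ (G.inc '' S).ncard := Set.ncard_le_ncard hsub
    _ ≤ S.ncard := Set.ncard_image_le

theorem ncard_le_ncard_add_one [Finite E] {S : Set E} {U : Set V}
    (hin : ∀ e ∈ S, ∀ x ∈ G.inc e, x ∈ U) (hconn : ∀ a ∈ U, ∀ b ∈ U, G.ReachOn S a b) :
    U.ncard ≤ S.ncard + 1 := by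
  rcases U.eq_empty_or_nonempty with rfl | hne
  · simp
  have := (G.connected_simpleOn hne hin hconn).card_vert_le_card_edgeSet_add_one
  rw [Nat.card_coe_set_eq] at this
  linarith [G.card_edgeSet_simpleOn_le S U]

theorem isTree_of_ncard_lt [Finite E] {S : Set E} {U : Set V} (hne : U.Nonempty)
    (hin : ∀ e ∈ S, ∀ x ∈ G.inc e, x ∈ U) (hconn : ∀ a ∈ U, ∀ b ∈ U, G.ReachOn S a b)
    (hlt : S.ncard < U.ncard) : G.IsTree U S :=
  ⟨hne, hin, hconn, by have := G.ncard_le_ncard_add_one hin hconn; omega⟩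

variable {G} in
theorem IsTree.isTree_simpleOn [Finite V] [Finite E] {U : Set V} {S : Set E}
    (hT : G.IsTree U S) : (G.simpleOn S U).IsTree := by
  have hconn := G.connected_simpleOn hT.nonempty hT.edges_in hT.conn
  refine SimpleGraph.isTree_iff_connected_and_card.2 ⟨hconn, ?_⟩
  have h1 := hconn.card_vert_le_card_edgeSet_add_one
  have h2 := G.card_edgeSet_simpleOn_le S U
  have h3 := hT.card_eq
  rw [Nat.card_coe_set_eq U] at h1 ⊢
  omega

variable {G} in
theorem IsTree.exists_properOn [Finite V] [Finite E] {U : Set V} {S : Set E}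
    (hT : G.IsTree U S) {w : V} (hw : w ∈ U) (lam : Bool) :
    ∃ c : V → Bool, G.ProperOn S c ∧ c w = lam := by
  classical
  obtain ⟨col⟩ := hT.isTree_simpleOn.isBipartite
  refine ⟨fun v => if hv : v ∈ U then lam == decide (col ⟨v, hv⟩ = col ⟨w, hw⟩) else lam,
    ?_, by simp [hw]⟩
  intro e he a b hab
  have ha : a ∈ U := hT.edges_in e he a (by rw [hab]; exact Sym2.mem_mk_left _ _)
  have hb : b ∈ U := hT.edges_in e he b (by rw [hab]; exact Sym2.mem_mk_right _ _)
  have hadj : (G.simpleOn S U).Adj ⟨a, ha⟩ ⟨b, hb⟩ := ⟨e, he, hab⟩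
  have hcol : col ⟨a, ha⟩ ≠ col ⟨b, hb⟩ := col.valid hadj
  simp only [ha, hb, dite_true]
  -- of two distinct colours in `Fin 2`, exactly one is the colour of `w`
  revert hcol
  generalize col ⟨a, ha⟩ = x
  generalize col ⟨b, hb⟩ = y
  generalize col ⟨w, hw⟩ = z
  revert x y z
  cases lam <;> decide

def component (S : Set E) (w : V) : Set V := {x | G.ReachOn S w x}

def componentEdges (S : Set E) (w : V) : Set E := {e ∈ S | ∀ x ∈ G.inc e, x ∈ G.component S w}

section Component

variable {S : Set E} {w : V}

theorem mem_component_self : w ∈ G.component S w := .refl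

theorem mem_component_of_reachOn {u v : V} (hu : u ∈ G.component S w) (h : G.ReachOn S u v) :
    v ∈ G.component S w :=
  Relation.ReflTransGen.trans hu h

theorem mem_componentEdges {e : E} (he : e ∈ S) {x : V} (hx : x ∈ G.inc e)
    (hxw : x ∈ G.component S w) : e ∈ G.componentEdges S w := by
  refine ⟨he, fun y hy => ?_⟩
  obtain ⟨z, hz⟩ := Sym2.mem_iff_exists.1 hx
  rw [hz, Sym2.mem_iff] at hy
  rcases hy with rfl | rfl
  · exact hxw
  · exact G.mem_component_of_reachOn hxw (.single ⟨e, he, hz⟩)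

theorem degOn_componentEdges {x : V} (hx : x ∈ G.component S w) :
    G.degOn (G.componentEdges S w) x = G.degOn S x := by
  unfold degOn
  congr 1
  ext e
  exact ⟨fun ⟨he, hxe⟩ => ⟨he.1, hxe⟩, fun ⟨he, hxe⟩ => ⟨G.mem_componentEdges he hxe hx, hxe⟩⟩

theorem reachOn_componentEdges {a b : V} (ha : a ∈ G.component S w)
    (hb : b ∈ G.component S w) : G.ReachOn (G.componentEdges S w) a b := by
  suffices h : ∀ x ∈ G.component S w, G.ReachOn (G.componentEdges S w) w x from
    (G.reachOn_symm (h a ha)).trans (h b hb)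
  intro x hx
  induction (hx : G.ReachOn S w x) with
  | refl => exact .refl
  | @tail p q hwp hpq ih =>
    obtain ⟨e, he, hinc⟩ := hpq
    have hpe : p ∈ G.inc e := by rw [hinc]; exact Sym2.mem_mk_left _ _
    exact ih.tail ⟨e, G.mem_componentEdges he hpe hwp, hinc⟩

theorem properOn_componentEdges_iff {c : V → Bool} :
    G.ProperOn (G.componentEdges S w) c ↔
      ∀ e ∈ S, ∀ u v : V, G.inc e = s(u, v) → u ∈ G.component S w → c u ≠ c v := by
  refine ⟨fun hc e he u v huv hu => hc e ?_ u v huv, fun hc e he u v huv => hc e he.1 u v huv ?_⟩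
  · exact G.mem_componentEdges he (by rw [huv]; exact Sym2.mem_mk_left _ _) hu
  · exact he.2 u (by rw [huv]; exact Sym2.mem_mk_left _ _)

end Component

section Cycle

variable [Finite E] {F : Set E} {w : V}

theorem exists_mem_inc_of_isLeaf (hdeg2 : ∀ x ∈ G.component F w, G.degOn F x = 2)
    {T D : Set E} (hT : ∀ e ∈ T, ∀ x ∈ G.inc e, x ∈ G.component F w)
    (hDT : G.componentEdges F w \ D ⊆ T) {x : V} (hx : G.IsLeaf T x) :
    ∃ d ∈ D, x ∈ G.inc d := by
  have hxC : x ∈ G.component F w := G.mem_of_degOn_pos hT (by rw [hx]; exact one_pos)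
  by_contra! hxD
  have := G.degOn_le_degOn (S := G.componentEdges F w) (T := T) (v := x)
    fun e he hxe => hDT ⟨he, fun heD => hxD e heD hxe⟩
  rw [G.degOn_componentEdges hxC, hdeg2 x hxC, show G.degOn T x = 1 from hx] at this
  omega

variable [Finite V]

theorem ncard_componentEdges_le (hdeg2 : ∀ x ∈ G.component F w, G.degOn F x = 2) :
    (G.componentEdges F w).ncard ≤ (G.component F w).ncard := by
  have := G.two_mul_ncard_add_two_le (S := G.componentEdges F w) (fun _ he => he.2)
    (fun x hx => ((G.degOn_componentEdges hx).trans (hdeg2 x hx)).le) G.mem_component_self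
  rw [G.degOn_componentEdges G.mem_component_self, hdeg2 w G.mem_component_self] at this
  omega

/-- A cycle stays connected when one edge is deleted: otherwise the component of one end of the
deleted edge would contain exactly one vertex of odd degree. -/
theorem reachOn_componentEdges_sdiff (hdeg2 : ∀ x ∈ G.component F w, G.degOn F x = 2) {e : E}
    (he : e ∈ G.componentEdges F w) {a b : V} (ha : a ∈ G.component F w)
    (hb : b ∈ G.component F w) : G.ReachOn (G.componentEdges F w \ {e}) a b := by
  obtain ⟨y₁, y₂, hy⟩ := G.exists_inc_eq e
  refine G.reachOn_sdiff_of_reachOn_ends hy ?_ (G.reachOn_componentEdges ha hb)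
  by_contra hy₂
  set S := G.componentEdges F w \ {e}
  have hy₁ : y₁ ∈ G.component F w := he.2 y₁ (by rw [hy]; exact Sym2.mem_mk_left _ _)
  have hAC : ∀ x ∈ G.component S y₁, x ∈ G.component F w := fun x hx =>
    G.mem_component_of_reachOn hy₁ (G.reachOn_mono (fun _ h => h.1.1) hx)
  have heven := G.even_degOn (S := G.componentEdges S y₁) (fun _ he => he.2)
    G.mem_component_self fun x hx hxy₁ => by
      have hxe : x ∉ G.inc e := by
        rw [hy, Sym2.mem_iff]
        rintro (rfl | rfl)
        exacts [hxy₁ rfl, hy₂ hx]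
      rw [G.degOn_componentEdges hx, G.degOn_sdiff_of_notMem (by simpa using hxe),
        G.degOn_componentEdges (hAC x hx), hdeg2 x (hAC x hx)]
  have hodd : G.degOn S y₁ + 1 = 2 := by
    rw [G.degOn_sdiff_singleton_add_one he (by rw [hy]; exact Sym2.mem_mk_left y₁ y₂),
      G.degOn_componentEdges hy₁, hdeg2 y₁ hy₁]
  rw [G.degOn_componentEdges G.mem_component_self, show G.degOn S y₁ = 1 by omega] at heven
  exact Nat.not_even_one heven

theorem isTree_componentEdges_sdiff (hdeg2 : ∀ x ∈ G.component F w, G.degOn F x = 2) {e : E}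
    (he : e ∈ G.componentEdges F w) :
    G.IsTree (G.component F w) (G.componentEdges F w \ {e}) :=
  G.isTree_of_ncard_lt ⟨w, G.mem_component_self⟩ (fun _ he' => he'.1.2)
    (fun _ ha _ hb => G.reachOn_componentEdges_sdiff hdeg2 he ha hb)
    ((Set.ncard_sdiff_singleton_lt_of_mem he).trans_le (G.ncard_componentEdges_le hdeg2))

theorem isTree_insert_componentEdges_sdiff_pair
    (hdeg2 : ∀ x ∈ G.component F w, G.degOn F x = 2) {g g' f : E} {u v : V}
    (hv : {e ∈ G.componentEdges F w | v ∈ G.inc e} = {g, g'}) (hgg' : g ≠ g')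
    (hf : G.inc f = s(u, v)) (hu : u ∈ G.component F w) :
    G.IsTree (G.component F w) (insert f (G.componentEdges F w \ {g, g'})) := by
  classical
  have hg : g ∈ {e ∈ G.componentEdges F w | v ∈ G.inc e} := by rw [hv]; exact Or.inl rfl
  have hg' : g' ∈ {e ∈ G.componentEdges F w | v ∈ G.inc e} := by rw [hv]; exact Or.inr rfl
  have hvC : v ∈ G.component F w := hg.1.2 v hg.2
  have huv := G.ne_of_inc_eq hf
  obtain ⟨y', hg'y'⟩ := Sym2.mem_iff_exists.1 hg'.2
  have hreach : ∀ a ∈ G.component F w,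
      G.ReachOn (insert f (G.componentEdges F w \ {g, g'})) a u := by
    intro a ha
    by_cases hav : a = v
    · subst hav
      exact .single ⟨f, Set.mem_insert _ _, hf.trans Sym2.eq_swap⟩
    have huniq : ∀ e ∈ G.componentEdges F w \ {g}, v ∈ G.inc e → e = g' := by
      rintro e ⟨he, heg⟩ hve
      have : e ∈ {e ∈ G.componentEdges F w | v ∈ G.inc e} := ⟨he, hve⟩
      rw [hv] at this
      exact this.resolve_left heg
    have := G.reachOn_sdiff_of_unique_inc hg'y' huniq
      (G.reachOn_componentEdges_sdiff hdeg2 hg.1 ha hu)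
    rw [if_neg hav, if_neg huv] at this
    refine G.reachOn_mono ?_ this
    rintro e ⟨⟨he, heg⟩, heg'⟩
    refine Or.inr ⟨he, ?_⟩
    rintro (rfl | rfl)
    exacts [heg rfl, heg' rfl]
  refine G.isTree_of_ncard_lt ⟨u, hu⟩ ?_
    (fun a ha b hb => (hreach a ha).trans (G.reachOn_symm (hreach b hb))) ?_
  · rintro e (rfl | ⟨he, -⟩) x hx
    · rw [hf, Sym2.mem_iff] at hx
      rcases hx with rfl | rfl
      exacts [hu, hvC]
    · exact he.2 x hx
  · have hsub : ({g, g'} : Set E) ⊆ G.componentEdges F w := by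
      rintro _ (rfl | rfl)
      exacts [hg.1, hg'.1]
    have h1 := Set.ncard_sdiff_add_ncard_of_subset hsub
    rw [Set.ncard_pair hgg'] at h1
    have h2 := Set.ncard_insert_le f (G.componentEdges F w \ {g, g'})
    have h3 := G.ncard_componentEdges_le hdeg2
    omega

end Cycle

section NoGoodTree

variable [Fintype V] {F : Set E} {w : V} {lam : Bool}

def NoWeaklyEvenSpanningTree (F : Set E) (w : V) (lam : Bool) : Prop :=
  ∀ (S : Set E) (c : V → Bool), G.IsTree (G.component F w) S → G.ProperOn S c → c w = lam →
    ∃ v, G.IsLeaf S v ∧ G.degree v = G.maxDegree ∧ c v = true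

theorem noWeaklyEvenSpanningTree_of_not_exists
    (hno : ¬ ∃ (U : Set V) (S : Set E) (c : V → Bool),
      w ∈ U ∧ G.IsTree U S ∧
      (∀ u ∈ U, ∀ v : V, G.ReachOn F u v → v ∈ U) ∧
      G.ProperOn S c ∧ c w = lam ∧
      (∀ v : V, G.IsLeaf S v → G.degree v = G.maxDegree → c v = false)) :
    G.NoWeaklyEvenSpanningTree F w lam := by
  intro S c hT hc hcw
  by_contra! hleaf
  exact hno ⟨_, S, c, G.mem_component_self, hT, fun _ hu _ => G.mem_component_of_reachOn hu,
    hc, hcw, fun v hv hmax => by simpa using hleaf v hv hmax⟩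

variable [Finite E]

theorem degOn_eq_two_of_mem_component (hF : G.IsWeakTwoFactor F)
    (hbad : G.NoWeaklyEvenSpanningTree F w lam) : ∀ x ∈ G.component F w, G.degOn F x = 2 := by
  by_contra! h
  obtain ⟨a, ha, ha2⟩ := h
  have hin : ∀ e ∈ G.componentEdges F w, ∀ x ∈ G.inc e, x ∈ G.component F w :=
    fun _ he => he.2
  have hcard := G.two_mul_ncard_add_two_le hin
    (fun x hx => (G.degOn_componentEdges hx).trans_le (hF x).1) ha
  rw [G.degOn_componentEdges ha] at hcard
  have hT : G.IsTree (G.component F w) (G.componentEdges F w) :=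
    G.isTree_of_ncard_lt ⟨w, G.mem_component_self⟩ hin
      (fun _ ha _ hb => G.reachOn_componentEdges ha hb) (by have := (hF a).1; omega)
  obtain ⟨c, hc, hcw⟩ := hT.exists_properOn G.mem_component_self lam
  obtain ⟨v, hleaf, hmax, -⟩ := hbad _ c hT hc hcw
  have hv : v ∈ G.component F w := G.mem_of_degOn_pos hin (by rw [hleaf]; exact one_pos)
  have hleaf' : G.degOn F v = 1 := (G.degOn_componentEdges hv).symm.trans hleaf
  exact ((hF v).2 (by omega)).ne hmax

theorem exists_properOn_componentEdges (hdeg2 : ∀ x ∈ G.component F w, G.degOn F x = 2)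
    (hbad : G.NoWeaklyEvenSpanningTree F w lam) :
    ∃ c : V → Bool, G.ProperOn (G.componentEdges F w) c ∧ c w = lam := by
  have hw : w ∈ G.component F w := G.mem_component_self
  choose! c hc hcw using fun e (he : e ∈ G.componentEdges F w) =>
    (G.isTree_componentEdges_sdiff hdeg2 he).exists_properOn hw lam
  have hends : ∀ e ∈ G.componentEdges F w, ∀ x y, G.inc e = s(x, y) → c e x = c e y →
      c e x = true := by
    intro e he x y hxy hcxy
    obtain ⟨v, hleaf, -, hv⟩ :=
      hbad _ _ (G.isTree_componentEdges_sdiff hdeg2 he) (hc e he) (hcw e he)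
    obtain ⟨_, rfl, hve⟩ :=
      G.exists_mem_inc_of_isLeaf hdeg2 (fun _ he' => he'.1.2) subset_rfl hleaf
    rw [hxy, Sym2.mem_iff] at hve
    rcases hve with rfl | rfl
    exacts [hv, hcxy.trans hv]
  by_contra! hnone
  have hsame : ∀ e ∈ G.componentEdges F w, ∀ x y, G.inc e = s(x, y) → c e x = c e y := by
    intro e he x y hxy
    by_contra hne
    refine hnone (c e) (fun e' he' a b hab => ?_) (hcw e he)
    by_cases he'e : e' = e
    · subst he'e
      rcases Sym2.eq_iff.1 (hab.symm.trans hxy) with ⟨rfl, rfl⟩ | ⟨rfl, rfl⟩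
      exacts [hne, Ne.symm hne]
    · exact hc e he e' ⟨he', he'e⟩ a b hab
  have hdeg : ∀ x ∈ G.component F w, G.degOn (G.componentEdges F w) x = 2 :=
    fun x hx => (G.degOn_componentEdges hx).trans (hdeg2 x hx)
  obtain ⟨e, he, hwe⟩ := G.exists_mem_inc_of_degOn_pos (by rw [hdeg w hw]; exact two_pos)
  obtain ⟨y, hwy⟩ := Sym2.mem_iff_exists.1 hwe
  have hy : y ∈ G.component F w := he.2 y (by rw [hwy]; exact Sym2.mem_mk_right _ _)
  obtain ⟨e', ⟨he', hye'⟩, he'e⟩ := Set.exists_ne_of_one_lt_ncard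
    (show 1 < G.degOn (G.componentEdges F w) y by rw [hdeg y hy]; norm_num) e
  obtain ⟨z, hyz⟩ := Sym2.mem_iff_exists.1 hye'
  have hlam : lam = true := (hcw e he).symm.trans (hends e he w y hwy (hsame e he w y hwy))
  have hy' : c e' y = true := hends e' he' y z hyz (hsame e' he' y z hyz)
  exact hc e' he' e ⟨he, Ne.symm he'e⟩ w y hwy (by rw [hcw e' he', hlam, hy'])

theorem degree_eq_maxDegree_of_properOn (hdeg2 : ∀ x ∈ G.component F w, G.degOn F x = 2)
    (hbad : G.NoWeaklyEvenSpanningTree F w lam) {c : V → Bool}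
    (hc : G.ProperOn (G.componentEdges F w) c) (hcw : c w = lam) {a : V}
    (ha : a ∈ G.component F w) (hca : c a = true) : G.degree a = G.maxDegree := by
  by_contra hmax
  obtain ⟨e, he, hae⟩ := G.exists_mem_inc_of_degOn_pos (S := G.componentEdges F w)
    (by rw [G.degOn_componentEdges ha, hdeg2 a ha]; exact two_pos)
  obtain ⟨b, hab⟩ := Sym2.mem_iff_exists.1 hae
  obtain ⟨v, hleaf, hvmax, hcv⟩ :=
    hbad _ c (G.isTree_componentEdges_sdiff hdeg2 he) (hc.mono Set.sdiff_subset) hcw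
  obtain ⟨d, hd, hve⟩ :=
    G.exists_mem_inc_of_isLeaf hdeg2 (fun _ he' => he'.1.2) subset_rfl hleaf
  rw [Set.mem_singleton_iff.1 hd, hab, Sym2.mem_iff] at hve
  rcases hve with rfl | rfl
  exacts [hmax hvmax, hc e he a v hab (hca.trans hcv.symm)]

theorem inc_ne_of_color_eq_true (hdeg2 : ∀ x ∈ G.component F w, G.degOn F x = 2)
    (hbad : G.NoWeaklyEvenSpanningTree F w lam) {c : V → Bool}
    (hc : G.ProperOn (G.componentEdges F w) c) (hcw : c w = lam) {u v : V}
    (hu : u ∈ G.component F w) (hv : v ∈ G.component F w) (hcu : c u = true)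
    (hcv : c v = true) (f : E) : G.inc f ≠ s(u, v) := by
  intro hf
  wlog hvw : v ≠ w generalizing u v
  · exact this hv hu hcv hcu (hf.trans Sym2.eq_swap)
      fun h => G.ne_of_inc_eq hf (h.trans (not_not.1 hvw).symm)
  classical
  obtain ⟨g, g', hgg', hvg⟩ :=
    Set.ncard_eq_two.1 ((G.degOn_componentEdges hv).trans (hdeg2 v hv))
  have hT := G.isTree_insert_componentEdges_sdiff_pair hdeg2 hvg hgg' hf hu
  have hvD : ∀ e ∈ G.componentEdges F w \ {g, g'}, v ∉ G.inc e := fun e ⟨he, hegg⟩ hve =>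
    hegg (hvg ▸ ⟨he, hve⟩)
  obtain ⟨x, hleaf, -, hx⟩ := hbad _ _ hT
    ((hc.mono Set.sdiff_subset).insert_update hf hvD (b := false) (by rw [hcu]; decide))
    (by rw [Function.update_of_ne hvw.symm]; exact hcw)
  obtain ⟨d, hd, hxd⟩ :=
    G.exists_mem_inc_of_isLeaf hdeg2 hT.edges_in (Set.subset_insert _ _) hleaf
  rw [← hvg] at hd
  by_cases hxv : x = v
  · subst hxv
    simp at hx
  · rw [Function.update_of_ne hxv] at hx
    exact hc d hd.1 x v ((Sym2.mem_and_mem_iff hxv).1 ⟨hxd, hd.2⟩) (hx.trans hcv.symm)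

end NoGoodTree

end Multigraph

theorem component_even_cycle_of_no_good_tree_general {V E : Type} [Fintype V] [Fintype E]
    (G : Multigraph V E) (F : Set E) (hF : G.IsWeakTwoFactor F) (w : V) (lam : Bool)
    (hno : ¬ ∃ (U : Set V) (S : Set E) (c : V → Bool),
      w ∈ U ∧ G.IsTree U S ∧
      (∀ u ∈ U, ∀ v : V, G.ReachOn F u v → v ∈ U) ∧
      G.ProperOn S c ∧ c w = lam ∧
      (∀ v : V, G.IsLeaf S v → G.degree v = G.maxDegree → c v = false)) :
    (∀ v ∈ {x : V | G.ReachOn F w x}, G.degOn F v = 2) ∧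
    (∃ c : V → Bool, c w = lam ∧
      ∀ e ∈ F, ∀ u v : V, G.inc e = s(u, v) → u ∈ {x : V | G.ReachOn F w x} → c u ≠ c v) ∧
    (∀ c : V → Bool, c w = lam →
      (∀ e ∈ F, ∀ u v : V, G.inc e = s(u, v) → u ∈ {x : V | G.ReachOn F w x} → c u ≠ c v) →
      (∀ v ∈ {x : V | G.ReachOn F w x}, c v = true → G.degree v = G.maxDegree) ∧
      (∀ (e : E) (u v : V), G.inc e = s(u, v) →
        u ∈ {x : V | G.ReachOn F w x} → c u = true →
        v ∈ {x : V | G.ReachOn F w x} → c v = true → False)) := by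
  have hbad := G.noWeaklyEvenSpanningTree_of_not_exists hno
  have hdeg2 := G.degOn_eq_two_of_mem_component hF hbad
  refine ⟨hdeg2, ?_, fun c hcw hc => ?_⟩
  · obtain ⟨c, hc, hcw⟩ := G.exists_properOn_componentEdges hdeg2 hbad
    exact ⟨c, hcw, G.properOn_componentEdges_iff.1 hc⟩
  · have hc := G.properOn_componentEdges_iff.2 hc
    exact ⟨fun v hv hcv => G.degree_eq_maxDegree_of_properOn hdeg2 hbad hc hcw hv hcv,
      fun f u v hf hu hcu hv hcv => G.inc_ne_of_color_eq_true hdeg2 hbad hc hcw hu hv hcu hcv f hf⟩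

/-- Let `G` be a 2-edge-connected non-regular multigraph, `F` a
weak 2-factor of `G`, `w ∈ V(G)` and `lam ∈ {0,1}` (with `false` for type 0 and
`true` for type 1). A tree in `G` is *good* if its vertex set is a union of
vertex sets of components of `F` (equivalently, is closed under reachability in
`F`). Suppose `G` has no good weakly even `(w, lam)`-tree. Then the component
`C₀ = {v | w ⟶F v}` of `F` containing `w` is an even cycle (every vertex of
`C₀` has degree 2 in `F`, and `C₀` admits a proper 2-colouring); moreover for
the `(w, lam)`-bipartition `(X₀, Y₀)` of `C₀` (given by a proper 2-colouring
`c` of `C₀` with `c w = lam`, where `Y₀` is the set of vertices of `C₀`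
coloured `true`), every vertex of `Y₀` has degree `Δ(G)` in `G` and `Y₀` is an
independent set in `G`. -/
theorem component_even_cycle_of_no_good_tree {V E : Type} [Fintype V] [Fintype E]
    (G : Multigraph V E) (h2ec : G.TwoEdgeConnected) (hnreg : ¬ G.IsRegular)
    (F : Set E) (hF : G.IsWeakTwoFactor F) (w : V) (lam : Bool)
    (hno : ¬ ∃ (U : Set V) (S : Set E) (c : V → Bool),
      w ∈ U ∧ G.IsTree U S ∧
      (∀ u ∈ U, ∀ v : V, G.ReachOn F u v → v ∈ U) ∧
      G.ProperOn S c ∧ c w = lam ∧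
      (∀ v : V, G.IsLeaf S v → G.degree v = G.maxDegree → c v = false)) :
    (∀ v ∈ {x : V | G.ReachOn F w x}, G.degOn F v = 2) ∧
    (∃ c : V → Bool, c w = lam ∧
      ∀ e ∈ F, ∀ u v : V, G.inc e = s(u, v) → u ∈ {x : V | G.ReachOn F w x} → c u ≠ c v) ∧
    (∀ c : V → Bool, c w = lam →
      (∀ e ∈ F, ∀ u v : V, G.inc e = s(u, v) → u ∈ {x : V | G.ReachOn F w x} → c u ≠ c v) →
      (∀ v ∈ {x : V | G.ReachOn F w x}, c v = true → G.degree v = G.maxDegree) ∧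
      (∀ (e : E) (u v : V), G.inc e = s(u, v) →
        u ∈ {x : V | G.ReachOn F w x} → c u = true →
        v ∈ {x : V | G.ReachOn F w x} → c v = true → False)) :=
  component_even_cycle_of_no_good_tree_general G F hF w lam hno
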